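/- arXiv:1203.2392 — 12 statements merged into one kernel-verified Lean document; each statement's English description precedes it below -/
import Mathlib

section
/- For all ρ ∈ [0,1] and θ ∈ [0, π/4], the quantity f(ρ,θ) := (2 sin²θ − 1) ρ² − (4 sin²θ − √2 (sin θ + cos θ)) ρ − 2√2 cos θ + 2 is ≤ 0, with equality when θ = π/4. -/
open Real

/-! Write `s = sin θ`, `c = cos θ`. As a polynomial in `ρ`, `f` has leading coefficient
`2s² - 1 = s² - c²`, which is negative for `θ < π/4`, and its discriminant is nonpositive
whenever `0 ≤ s ≤ c`; so `f ≤ 0` for every real `ρ`. At `θ = π/4` all three coefficients vanish.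
The discriminant bound becomes, in `u = c - s` and `v = c + s` (so `u² + v² = 2`),
`8 + 6u² - 4u⁴ ≤ 4√2 v (1 + u²)`, which after squaring is `0 ≤ 4u⁴ (7 + 4u² - 4u⁴)`. -/

theorem quadratic_nonpos_of_discrim_nonpos {a b c : ℝ} (ha : a < 0)
    (h : discrim a b c ≤ 0) (x : ℝ) : a * (x * x) + b * x + c ≤ 0 := by
  have hsq : 4 * a * (a * (x * x) + b * x + c) = (2 * a * x + b) ^ 2 - discrim a b c := by
    rw [discrim]; ring
  nlinarith [sq_nonneg (2 * a * x + b)]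

theorem eight_add_six_mul_sq_sub_four_mul_pow_four_le {u v : ℝ} (hu0 : 0 ≤ u) (hu1 : u ≤ 1)
    (hv : 0 ≤ v) (huv : u ^ 2 + v ^ 2 = 2) :
    8 + 6 * u ^ 2 - 4 * u ^ 4 ≤ 4 * √2 * v * (1 + u ^ 2) := by
  have hr2 : √2 ^ 2 = 2 := sq_sqrt (by norm_num)
  have hsq : (4 * √2 * v * (1 + u ^ 2)) ^ 2 - (8 + 6 * u ^ 2 - 4 * u ^ 4) ^ 2
      = 4 * u ^ 4 * (7 + 4 * u ^ 2 - 4 * u ^ 4) := by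
    linear_combination (16 * v ^ 2 * (1 + u ^ 2) ^ 2) * hr2 + (32 * (1 + u ^ 2) ^ 2) * huv
  have hrhs : 0 ≤ 4 * √2 * v * (1 + u ^ 2) := by positivity
  have hfactor : 0 ≤ 7 + 4 * u ^ 2 - 4 * u ^ 4 := by nlinarith [pow_le_one₀ hu0 hu1 (n := 2)]
  nlinarith [mul_nonneg (pow_nonneg hu0 4) hfactor]

theorem discrim_nonpos_of_sin_cos {s c : ℝ} (hsc : s ^ 2 + c ^ 2 = 1) (hs : 0 ≤ s)
    (hle : s ≤ c) :
    discrim (2 * s ^ 2 - 1) (-(4 * s ^ 2 - √2 * (s + c))) (2 - 2 * √2 * c) ≤ 0 := by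
  have hr2 : √2 ^ 2 = 2 := sq_sqrt (by norm_num)
  have hc1 : c ≤ 1 := by nlinarith
  have hbound := eight_add_six_mul_sq_sub_four_mul_pow_four_le (u := c - s) (v := c + s)
    (by linarith) (by linarith) (by linarith) (by linear_combination 2 * hsc)
  have hdiscrim : discrim (2 * s ^ 2 - 1) (-(4 * s ^ 2 - √2 * (s + c))) (2 - 2 * √2 * c)
      = 8 + 6 * (c - s) ^ 2 - 4 * (c - s) ^ 4 - 4 * √2 * (c + s) * (1 + (c - s) ^ 2) := by
    rw [discrim]
    linear_combination (c ^ 2 + 2 * s * c + s ^ 2) * hr2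
      + (4 * √2 * c + 4 * c ^ 2 - 4 * √2 * s - 16 * s * c + 20 * s ^ 2) * hsc
  linarith

theorem stmt1_general (ρ θ : ℝ) (hθ : θ ∈ Set.Icc (0:ℝ) (π/4)) :
    (2 * sin θ ^ 2 - 1) * ρ ^ 2
      - (4 * sin θ ^ 2 - Real.sqrt 2 * (sin θ + cos θ)) * ρ
      - 2 * Real.sqrt 2 * cos θ + 2 ≤ 0
    ∧ (θ = π/4 →
      (2 * sin θ ^ 2 - 1) * ρ ^ 2
        - (4 * sin θ ^ 2 - Real.sqrt 2 * (sin θ + cos θ)) * ρ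
        - 2 * Real.sqrt 2 * cos θ + 2 = 0) := by
  obtain ⟨hθ0, hθ1⟩ := hθ
  have heq : θ = π/4 → (2 * sin θ ^ 2 - 1) * ρ ^ 2
      - (4 * sin θ ^ 2 - Real.sqrt 2 * (sin θ + cos θ)) * ρ
      - 2 * Real.sqrt 2 * cos θ + 2 = 0 := by
    rintro rfl
    rw [sin_pi_div_four, cos_pi_div_four]
    linear_combination (ρ ^ 2 / 2 - 1) * sq_sqrt (show (0:ℝ) ≤ 2 by norm_num)
  refine ⟨?_, heq⟩
  rcases hθ1.eq_or_lt with rfl | hlt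
  · exact (heq rfl).le
  have hsin : sin θ < √2 / 2 := by
    rw [← sin_pi_div_four]
    exact sin_lt_sin_of_lt_of_le_pi_div_two (by linarith [pi_pos]) (by linarith [pi_pos]) hlt
  have hcos : √2 / 2 < cos θ := by
    rw [← cos_pi_div_four]
    exact cos_lt_cos_of_nonneg_of_le_pi hθ0 (by linarith [pi_pos]) hlt
  have hs : 0 ≤ sin θ := sin_nonneg_of_nonneg_of_le_pi hθ0 (by linarith [pi_pos])
  have hsc := sin_sq_add_cos_sq θ
  have hlead : 2 * sin θ ^ 2 - 1 < 0 := by nlinarith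
  have := quadratic_nonpos_of_discrim_nonpos hlead
    (discrim_nonpos_of_sin_cos hsc hs (by linarith)) ρ
  linarith

/-- For all ρ ∈ [0,1] and θ ∈ [0, π/4],
f(ρ,θ) = (2 sin²θ − 1)ρ² − (4 sin²θ − √2(sin θ + cos θ))ρ − 2√2 cos θ + 2 ≤ 0,
with equality when θ = π/4. -/
theorem stmt1 (ρ θ : ℝ) (hρ : ρ ∈ Set.Icc (0:ℝ) 1) (hθ : θ ∈ Set.Icc (0:ℝ) (π/4)) :
    (2 * sin θ ^ 2 - 1) * ρ ^ 2
      - (4 * sin θ ^ 2 - Real.sqrt 2 * (sin θ + cos θ)) * ρ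
      - 2 * Real.sqrt 2 * cos θ + 2 ≤ 0
    ∧ (θ = π/4 →
      (2 * sin θ ^ 2 - 1) * ρ ^ 2
        - (4 * sin θ ^ 2 - Real.sqrt 2 * (sin θ + cos θ)) * ρ
        - 2 * Real.sqrt 2 * cos θ + 2 = 0) :=
  stmt1_general ρ θ hθ
end

section
/- Let α = 1/√2 and define the Douglas–Rachford map T(x,y) = (x/ρ, α + (1 − 1/ρ) y) where ρ = √(x² + y²). If (x,y) satisfies 0 < y ≤ x and x² + y² ≤ 1 (i.e. (x,y) ∈ P₁), then |T(x,y) − (α,α)|² ≤ (1/2) |(x,y) − (α,α)|². -/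
/-!
Write the point as `r • (c, s)` with `(c, s)` on the unit circle, so that its image is
`(c, α + (r - 1) s)`. Twice the squared distance of the image to `(α, α)`, subtracted from
the squared distance of the point, becomes, after multiplying by `2α + c + s > 0`,
`(c - s) * ((c - s - α (1 - r))² + (2α (c + s) + (c + s)² - 1/2) (1 - r)²)`.
Every factor is nonnegative because `c ≥ s ≥ 0` forces `c + s ≥ 1`.
-/

open Real

theorem douglas_rachford_sq_dist_le_half_polar {c s α : ℝ} (r : ℝ) (hs : 0 ≤ s) (hsc : s ≤ c)
    (hcs : c ^ 2 + s ^ 2 = 1) (hα₀ : 0 ≤ α) (hα : α ^ 2 = 1 / 2) :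
    (c - α) ^ 2 + ((r - 1) * s) ^ 2 ≤ 1 / 2 * ((r * c - α) ^ 2 + (r * s - α) ^ 2) := by
  have hsum : 1 ≤ c + s := by nlinarith
  have identity : (2 * α + (c + s)) *
      ((r * c - α) ^ 2 + (r * s - α) ^ 2 - 2 * ((c - α) ^ 2 + ((r - 1) * s) ^ 2)) =
      (c - s) * ((c - s - α * (1 - r)) ^ 2 +
        (2 * α * (c + s) + (c + s) ^ 2 - 1 / 2) * (1 - r) ^ 2) := by
    linear_combination (2 * r * (c + s) - 4 * c) * hcs +
      (s * (1 - 6 * r + r ^ 2) + c * (7 - 2 * r - r ^ 2)) * hα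
  have hrhs : 0 ≤ (c - s) * ((c - s - α * (1 - r)) ^ 2 +
      (2 * α * (c + s) + (c + s) ^ 2 - 1 / 2) * (1 - r) ^ 2) :=
    mul_nonneg (sub_nonneg.2 hsc) (add_nonneg (sq_nonneg _) (mul_nonneg (by nlinarith) (sq_nonneg _)))
  rw [← identity] at hrhs
  have := nonneg_of_mul_nonneg_right hrhs (by linarith)
  linarith

theorem stmt2_general (x y : ℝ) (hy : 0 < y) (hyx : y ≤ x) :
    let α : ℝ := 1 / Real.sqrt 2
    let ρ : ℝ := Real.sqrt (x ^ 2 + y ^ 2)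
    let x₁ : ℝ := x / ρ
    let y₁ : ℝ := α + (1 - 1 / ρ) * y
    (x₁ - α) ^ 2 + (y₁ - α) ^ 2 ≤ (1 / 2) * ((x - α) ^ 2 + (y - α) ^ 2) := by
  intro α ρ x₁ y₁
  have hρ : 0 < ρ := sqrt_pos.2 (by positivity)
  have hρsq : ρ ^ 2 = x ^ 2 + y ^ 2 := sq_sqrt (by positivity)
  have hα : α ^ 2 = 1 / 2 := by simp [α]
  have hcs : (x / ρ) ^ 2 + (y / ρ) ^ 2 = 1 := by
    rw [div_pow, div_pow, ← add_div, ← hρsq, div_self (by positivity)]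
  have h := douglas_rachford_sq_dist_le_half_polar ρ (div_nonneg hy.le hρ.le)
    (div_le_div_of_nonneg_right hyx hρ.le) hcs (by positivity) hα
  have hy₁ : y₁ - α = (ρ - 1) * (y / ρ) := by simp only [y₁]; field_simp; ring
  rwa [mul_div_cancel₀ _ hρ.ne', mul_div_cancel₀ _ hρ.ne', ← hy₁] at h

/-- In region P₁ = {0 < y ≤ x, x²+y² ≤ 1}, one DR step halves the squared
distance to (α,α), where α = 1/√2. -/
theorem stmt2 (x y : ℝ) (hy : 0 < y) (hyx : y ≤ x) (hρ : x ^ 2 + y ^ 2 ≤ 1) :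
    let α : ℝ := 1 / Real.sqrt 2
    let ρ : ℝ := Real.sqrt (x ^ 2 + y ^ 2)
    let x₁ : ℝ := x / ρ
    let y₁ : ℝ := α + (1 - 1 / ρ) * y
    (x₁ - α) ^ 2 + (y₁ - α) ^ 2 ≤ (1 / 2) * ((x - α) ^ 2 + (y - α) ^ 2) :=
  stmt2_general x y hy hyx
end

section
/- Let α = 1/√2 and T(x,y) = (x/ρ, α + (1 − 1/ρ) y), ρ = √(x²+y²). If x² + y² > 1 and 0 < y ≤ α (region P₂), then T(x,y) satisfies x₁² + y₁² > 1 and y₁ > α, where (x₁,y₁) = T(x,y); i.e. T(x,y) lies in P₃ ∪ P₄. -/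
/-!
Since `(x/ρ)² + (y/ρ)² = 1`, the inequality `x₁² + y₁² > 1` amounts to `y₁ > y/ρ`, and
`y₁ - y/ρ = α + y - 2y/ρ > α - y ≥ 0` because `ρ > 1`.
-/

lemma lt_add_one_sub_one_div_mul {a ρ y : ℝ} (hρ : 1 < ρ) (hy : 0 < y) :
    a < a + (1 - 1 / ρ) * y := by
  have : 1 / ρ < 1 := (div_lt_one (by linarith)).mpr hρ
  nlinarith

lemma div_lt_add_one_sub_one_div_mul {a ρ y : ℝ} (hρ : 1 < ρ) (hy : 0 < y) (hya : y ≤ a) :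
    y / ρ < a + (1 - 1 / ρ) * y := by
  have : y / ρ < y := div_lt_self hy hρ
  have hexpand : (1 - 1 / ρ) * y = y - y / ρ := by ring
  linarith

lemma div_sqrt_sq_add_div_sqrt_sq {x y : ℝ} (h : x ^ 2 + y ^ 2 ≠ 0) :
    (x / √(x ^ 2 + y ^ 2)) ^ 2 + (y / √(x ^ 2 + y ^ 2)) ^ 2 = 1 := by
  rw [div_pow, div_pow, Real.sq_sqrt (by positivity), ← add_div, div_self h]

/-- If (x,y) ∈ P₂ = {x²+y² > 1, 0 < y ≤ α}, then T(x,y) = (x₁,y₁) satisfies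
x₁² + y₁² > 1 and y₁ > α, i.e. T(x,y) ∈ P₃ ∪ P₄. -/
theorem stmt4 (x y : ℝ) (hρ : 1 < x ^ 2 + y ^ 2) (hy : 0 < y)
    (hyα : y ≤ 1 / Real.sqrt 2) :
    let α : ℝ := 1 / Real.sqrt 2
    let ρ : ℝ := Real.sqrt (x ^ 2 + y ^ 2)
    let x₁ : ℝ := x / ρ
    let y₁ : ℝ := α + (1 - 1 / ρ) * y
    x₁ ^ 2 + y₁ ^ 2 > 1 ∧ y₁ > α := by
  intro α ρ x₁ y₁
  have hρ₁ : 1 < ρ := by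
    rw [Real.lt_sqrt zero_le_one]
    linarith
  have hy₁ : y / ρ < y₁ := div_lt_add_one_sub_one_div_mul hρ₁ hy hyα
  refine ⟨?_, lt_add_one_sub_one_div_mul hρ₁ hy⟩
  calc 1 = x₁ ^ 2 + (y / ρ) ^ 2 := (div_sqrt_sq_add_div_sqrt_sq (by positivity)).symm
    _ < x₁ ^ 2 + y₁ ^ 2 := by gcongr
end

section
/- Let α = 1/√2 and T(x,y) = (x/ρ, α + (1 − 1/ρ) y), ρ = √(x²+y²). If α < y ≤ x (region P₃), then (x₁,y₁) = T(x,y) satisfies x₁² + y₁² > 1, x₁ > 0, and x₁ < y₁; i.e. T(x,y) ∈ P₄. -/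
/-!
Write `ρ = √(x² + y²)`. Clearing the denominator `ρ`, the inequality `x₁ < y₁` reads
`x + y < (α + y) ρ`, which holds because `x + y ≤ √2 ρ` (Cauchy–Schwarz) and `α + y > 2α = √2`.
Since `y ≤ x`, the same inequality also gives `y / ρ < y₁`, so
`x₁² + y₁² > (x / ρ)² + (y / ρ)² = 1`.
-/

open Real

lemma add_le_sqrt_two_mul_sqrt_sq_add_sq (x y : ℝ) : x + y ≤ √2 * √(x ^ 2 + y ^ 2) := by
  rw [← sqrt_mul zero_le_two]
  exact (le_abs_self _).trans (abs_le_sqrt (by nlinarith [sq_nonneg (x - y)]))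

lemma sqrt_two_lt_inv_sqrt_two_add {y : ℝ} (hy : 1 / √2 < y) : √2 < 1 / √2 + y := by
  have h : 1 / √2 + 1 / √2 = √2 := by
    field_simp
    norm_num
  linarith

lemma div_sq_add_div_sq_sqrt_sq_add_sq {x y : ℝ} (h : 0 < x ^ 2 + y ^ 2) :
    (x / √(x ^ 2 + y ^ 2)) ^ 2 + (y / √(x ^ 2 + y ^ 2)) ^ 2 = 1 := by
  rw [div_pow, div_pow, ← add_div, sq_sqrt h.le, div_self h.ne']

lemma div_lt_add_one_sub_inv_mul {a x y ρ : ℝ} (hρ : 0 < ρ) (h : x + y < (a + y) * ρ) :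
    x / ρ < a + (1 - 1 / ρ) * y := by
  have hexp : (a + (1 - 1 / ρ) * y) * ρ = (a + y) * ρ - y := by
    field_simp
    ring
  rw [div_lt_iff₀ hρ, hexp]
  linarith

/-- If (x,y) ∈ P₃ = {α < y ≤ x}, then T(x,y) = (x₁,y₁) satisfies
x₁² + y₁² > 1, x₁ > 0 and x₁ < y₁, i.e. T(x,y) ∈ P₄. -/
theorem stmt5 (x y : ℝ) (hαy : 1 / Real.sqrt 2 < y) (hyx : y ≤ x) :
    let α : ℝ := 1 / Real.sqrt 2
    let ρ : ℝ := Real.sqrt (x ^ 2 + y ^ 2)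
    let x₁ : ℝ := x / ρ
    let y₁ : ℝ := α + (1 - 1 / ρ) * y
    x₁ ^ 2 + y₁ ^ 2 > 1 ∧ 0 < x₁ ∧ x₁ < y₁ := by
  intro α ρ x₁ y₁
  have hy : 0 < y := lt_trans (by positivity) hαy
  have hx : 0 < x := hy.trans_le hyx
  have hρ : 0 < ρ := sqrt_pos.2 (by positivity)
  have hsum : x + y < (α + y) * ρ :=
    calc x + y ≤ √2 * ρ := add_le_sqrt_two_mul_sqrt_sq_add_sq x y
      _ < (α + y) * ρ := mul_lt_mul_of_pos_right (sqrt_two_lt_inv_sqrt_two_add hαy) hρ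
  have hx₁y₁ : x₁ < y₁ := div_lt_add_one_sub_inv_mul hρ hsum
  have hyρ : y / ρ < y₁ := div_lt_add_one_sub_inv_mul hρ (by linarith)
  have hunit : x₁ ^ 2 + (y / ρ) ^ 2 = 1 := div_sq_add_div_sq_sqrt_sq_add_sq (by positivity)
  have hsq : (y / ρ) ^ 2 < y₁ ^ 2 := pow_lt_pow_left₀ hyρ (by positivity) two_ne_zero
  exact ⟨by linarith, div_pos hx hρ, hx₁y₁⟩
end

section
/- Let α = 1/√2 and T(x,y) = (x/ρ, α + (1 − 1/ρ) y), ρ = √(x²+y²). If (x,y) ∈ P₄, i.e. x² + y² > 1 and 0 < x < y, then (x₁,y₁) = T(x,y) satisfies y₁ > α and x₁ < y₁. -/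
/-! The second coordinate grows because `1 - 1/ρ > 0` and `y > 0`; the first stays below `α`
because `|x| < |y|` means the point makes an angle of more than `π/4` with the `x`-axis, so
`x/ρ < cos (π/4) = α`. -/

theorem div_sqrt_sq_add_sq_lt_one_div_sqrt_two {x y : ℝ} (hxy : |x| < |y|) :
    x / Real.sqrt (x ^ 2 + y ^ 2) < 1 / Real.sqrt 2 := by
  have hsq : x ^ 2 < y ^ 2 := sq_lt_sq.2 hxy
  have hρ : 0 < Real.sqrt (x ^ 2 + y ^ 2) := Real.sqrt_pos.2 (by nlinarith [sq_nonneg x])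
  have key : Real.sqrt 2 * |x| < Real.sqrt (x ^ 2 + y ^ 2) := by
    rw [← Real.sqrt_sq (abs_nonneg x), ← Real.sqrt_mul zero_le_two, sq_abs]
    exact Real.sqrt_lt_sqrt (by positivity) (by linarith)
  rw [div_lt_div_iff₀ hρ (by positivity), one_mul]
  nlinarith [le_abs_self x, Real.sqrt_nonneg 2]

theorem one_sub_one_div_mul_pos {ρ y : ℝ} (hρ : 1 < ρ) (hy : 0 < y) : 0 < (1 - 1 / ρ) * y :=
  mul_pos (sub_pos.2 ((div_lt_one (by linarith)).2 hρ)) hy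

/-- If (x,y) ∈ P₄ = {x²+y² > 1, 0 < x < y}, then T(x,y) = (x₁,y₁) satisfies
y₁ > α and x₁ < y₁. -/
theorem stmt6 (x y : ℝ) (hρ : 1 < x ^ 2 + y ^ 2) (hx : 0 < x) (hxy : x < y) :
    let α : ℝ := 1 / Real.sqrt 2
    let ρ : ℝ := Real.sqrt (x ^ 2 + y ^ 2)
    let x₁ : ℝ := x / ρ
    let y₁ : ℝ := α + (1 - 1 / ρ) * y
    y₁ > α ∧ x₁ < y₁ := by
  intro α ρ x₁ y₁
  have hy : 0 < y := hx.trans hxy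
  have hρ1 : 1 < ρ := (Real.lt_sqrt zero_le_one).2 (by simpa using hρ)
  have hy₁ : α < y₁ := lt_add_of_pos_right α (one_sub_one_div_mul_pos hρ1 hy)
  have hx₁ : x₁ < α := div_sqrt_sq_add_sq_lt_one_div_sqrt_two
    (by rwa [abs_of_pos hx, abs_of_pos hy])
  exact ⟨hy₁, hx₁.trans hy₁⟩
end

section
/- Let α = 1/√2 and T(x,y) = (x/ρ, α + (1 − 1/ρ) y), ρ = √(x²+y²). If (x,y) satisfies x² + y² ≤ 1, x > 0 and y > α (region P₅), then (x₁,y₁) = T(x,y) satisfies x₁ ∈ (0,α), y₁ ≤ α and x₁ − y₁ < 0. -/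
/-- If (x,y) ∈ P₅ = {x²+y² ≤ 1, x > 0, y > α}, then T(x,y) = (x₁,y₁) satisfies
x₁ ∈ (0, α), y₁ ≤ α and x₁ − y₁ < 0. -/
theorem stmt7 (x y : ℝ) (hρ : x ^ 2 + y ^ 2 ≤ 1) (hx : 0 < x)
    (hy : 1 / Real.sqrt 2 < y) :
    let α : ℝ := 1 / Real.sqrt 2
    let ρ : ℝ := Real.sqrt (x ^ 2 + y ^ 2)
    let x₁ : ℝ := x / ρ
    let y₁ : ℝ := α + (1 - 1 / ρ) * y
    0 < x₁ ∧ x₁ < α ∧ y₁ ≤ α ∧ x₁ - y₁ < 0 := by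
  intro α ρ x₁ y₁
  have hs : (0:ℝ) < Real.sqrt 2 := Real.sqrt_pos.mpr (by norm_num)
  have hs2 : Real.sqrt 2 * Real.sqrt 2 = 2 := Real.mul_self_sqrt (by norm_num)
  have hα : (0:ℝ) < α := by positivity
  have hαs : α * Real.sqrt 2 = 1 := by show 1 / Real.sqrt 2 * Real.sqrt 2 = 1; exact one_div_mul_cancel hs.ne'
  have hα2 : α ^ 2 = 1 / 2 := by
    show (1 / Real.sqrt 2) ^ 2 = 1 / 2
    rw [div_pow, one_pow, sq, hs2]
  have hy0 : 0 < y := lt_trans hα hy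
  have hpos : (0:ℝ) < x ^ 2 + y ^ 2 := by positivity
  have hρ0 : 0 < ρ := Real.sqrt_pos.mpr hpos
  have hρsq : ρ ^ 2 = x ^ 2 + y ^ 2 := Real.sq_sqrt hpos.le
  have hρ1 : ρ ≤ 1 := by
    rw [show (1:ℝ) = Real.sqrt 1 by simp]
    exact Real.sqrt_le_sqrt hρ
  have hy2 : 1 / 2 < y ^ 2 := by nlinarith [hy, hα, hα2]
  have hxy2 : x ^ 2 < y ^ 2 := by nlinarith
  have h2α : 2 * α = Real.sqrt 2 := by nlinarith [hαs, hs2]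
  refine ⟨div_pos hx hρ0, ?_, ?_, ?_⟩
  · rw [div_lt_iff₀ hρ0]
    nlinarith [mul_pos hα hρ0, hρsq, hα2]
  · have h1 : 1 ≤ 1 / ρ := by rw [le_div_iff₀ hρ0]; linarith
    have : (1 - 1 / ρ) * y ≤ 0 := mul_nonpos_of_nonpos_of_nonneg (by linarith) hy0.le
    show α + (1 - 1 / ρ) * y ≤ α
    linarith
  · have hsum : x + y ≤ Real.sqrt 2 * ρ := by
      nlinarith [sq_nonneg (x - y), hρsq, hs2, mul_pos hs hρ0, sq_nonneg (x + y - Real.sqrt 2 * ρ)]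
    have key : x + y < ρ * (α + y) := by nlinarith [hρ0, hy, h2α, hsum]
    have heq : x₁ - y₁ = (x + y) / ρ - (α + y) := by
      show x / ρ - (α + (1 - 1 / ρ) * y) = (x + y) / ρ - (α + y)
      field_simp
      ring
    rw [heq, sub_neg, div_lt_iff₀ hρ0]
    linarith [key]
end

section
/- Let ε = (1 − 2^{−1/3})^{3/2} and α = 1/√2. The function g(θ) = α + ε tan θ − sin θ is nonnegative for all θ ∈ (π/4, π/2), and attains its minimum value 0 at θ = arcsin(2^{−1/6}). -/
open Real

/-!
Write `t = 2^{-1/6}` and `φ = arcsin t`. Then `α = t³ = sin³ φ` and `ε = (1 - t²)^{3/2} = cos³ φ`,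
so `g θ = sin³ φ + cos³ φ · tan θ - sin θ`, which vanishes at `θ = φ`. Nonnegativity, after
multiplying by `cos θ`, is `sin θ cos θ ≤ sin³ φ cos θ + cos³ φ sin θ`; this follows by adding the
AM-GM inequalities `3 a² x ≤ 2 a³ + x³` for `(a, x) = (sin φ, sin θ)` and `(cos φ, cos θ)`,
multiplied by `cos θ` and `sin θ` respectively. It holds on all of `(0, π/2)`.
-/

theorem mul_le_cube_mul_add_cube_mul {a b x y : ℝ} (ha : 0 ≤ a) (hb : 0 ≤ b) (hx : 0 ≤ x)
    (hy : 0 ≤ y) (hab : a ^ 2 + b ^ 2 = 1) (hxy : x ^ 2 + y ^ 2 = 1) :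
    x * y ≤ a ^ 3 * y + b ^ 3 * x := by
  have amgm_a : 0 ≤ (a - x) ^ 2 * (2 * a + x) * y := by positivity
  have amgm_b : 0 ≤ (b - y) ^ 2 * (2 * b + y) * x := by positivity
  linear_combination (amgm_a + amgm_b) / 2 - (3 / 2 * x * y) * hab + (1 / 2 * x * y) * hxy

theorem sin_cube_add_cos_cube_mul_tan_sub_sin_nonneg {φ θ : ℝ} (hφ : φ ∈ Set.Icc 0 (π / 2))
    (hθ : θ ∈ Set.Ioo 0 (π / 2)) : 0 ≤ sin φ ^ 3 + cos φ ^ 3 * tan θ - sin θ := by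
  have hcos : 0 < cos θ := cos_pos_of_mem_Ioo ⟨by linarith [hθ.1, pi_pos], hθ.2⟩
  have hsin : 0 < sin θ := sin_pos_of_pos_of_lt_pi hθ.1 (by linarith [hθ.2, pi_pos])
  have key := mul_le_cube_mul_add_cube_mul
    (sin_nonneg_of_nonneg_of_le_pi hφ.1 (by linarith [hφ.2, pi_pos]))
    (cos_nonneg_of_mem_Icc ⟨by linarith [hφ.1, pi_pos], hφ.2⟩) hsin.le hcos.le
    (sin_sq_add_cos_sq φ) (sin_sq_add_cos_sq θ)
  have expand : sin φ ^ 3 + cos φ ^ 3 * tan θ - sin θ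
      = (sin φ ^ 3 * cos θ + cos φ ^ 3 * sin θ - sin θ * cos θ) / cos θ := by
    rw [tan_eq_sin_div_cos]
    field_simp
  rw [expand]
  exact div_nonneg (by linarith) hcos.le

theorem sin_cube_add_cos_cube_mul_tan_sub_sin_self {φ : ℝ} (hφ : cos φ ≠ 0) :
    sin φ ^ 3 + cos φ ^ 3 * tan φ - sin φ = 0 := by
  rw [tan_eq_sin_div_cos, show cos φ ^ 3 * (sin φ / cos φ) = cos φ ^ 2 * sin φ by field_simp]
  linear_combination sin φ * sin_sq_add_cos_sq φ

theorem two_rpow_neg_one_sixth_sq : ((2 : ℝ) ^ (-(1 : ℝ) / 6)) ^ 2 = 2 ^ (-(1 : ℝ) / 3) := by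
  rw [← rpow_natCast, ← rpow_mul zero_le_two]
  norm_num

theorem two_rpow_neg_one_sixth_cube : ((2 : ℝ) ^ (-(1 : ℝ) / 6)) ^ 3 = 1 / √2 := by
  rw [sqrt_eq_rpow, one_div, ← rpow_neg zero_le_two, ← rpow_natCast, ← rpow_mul zero_le_two]
  norm_num

/-- With ε = (1 − 2^{−1/3})^{3/2} and α = 1/√2, the function
g(θ) = α + ε tan θ − sin θ is nonnegative on (π/4, π/2) and vanishes at
θ = arcsin(2^{−1/6}). -/
theorem stmt8 :
    let ε : ℝ := (1 - 2 ^ (-(1:ℝ)/3)) ^ ((3:ℝ)/2)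
    let α : ℝ := 1 / Real.sqrt 2
    let g : ℝ → ℝ := fun θ => α + ε * tan θ - sin θ
    (∀ θ ∈ Set.Ioo (π/4) (π/2), 0 ≤ g θ) ∧
    g (arcsin (2 ^ (-(1:ℝ)/6))) = 0 := by
  intro ε α g
  set t : ℝ := 2 ^ (-(1 : ℝ) / 6)
  have ht : 0 ≤ t := by positivity
  have ht1 : t < 1 := rpow_lt_one_of_one_lt_of_neg one_lt_two (by norm_num)
  have hα : sin (arcsin t) ^ 3 = α := by
    rw [sin_arcsin (by linarith) ht1.le, two_rpow_neg_one_sixth_cube]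
  have hcos_pos : 0 < cos (arcsin t) := by
    rw [cos_arcsin]
    exact sqrt_pos.2 (by nlinarith)
  have hε : cos (arcsin t) ^ 3 = ε := by
    rw [cos_arcsin, ← rpow_natCast, ← rpow_div_two_eq_sqrt _ (by nlinarith),
      two_rpow_neg_one_sixth_sq, Nat.cast_ofNat]
  have hg : g = fun θ => sin (arcsin t) ^ 3 + cos (arcsin t) ^ 3 * tan θ - sin θ := by
    rw [hα, hε]
  refine ⟨fun θ hθ => ?_, ?_⟩
  · rw [hg]
    exact sin_cube_add_cos_cube_mul_tan_sub_sin_nonneg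
      ⟨arcsin_nonneg.2 ht, arcsin_le_pi_div_two t⟩ ⟨by linarith [hθ.1, pi_pos], hθ.2⟩
  · rw [hg]
    exact sin_cube_add_cos_cube_mul_tan_sub_sin_self hcos_pos.ne'
end

section
/- Let α = 1/√2, γ = 5/2 − √2 + (1/2)√(29 − 20√2), and T(x,y) = (x/ρ, α + (1 − 1/ρ) y), ρ = √(x²+y²). If (x,y) lies in P₅ ∪ P₆ (i.e. 0 < x, x²+y² ≤ 1, y > α, or 0 < x < y ≤ α), then |T(x,y) − (α,α)|² < γ |(x,y) − (α,α)|². -/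
/-!
Multiplying by `ρ²`, the inequality becomes `0 < ρ K + c` with
`K = γ |(x,y) - (α,α)|² - 3/2 - y²` and `c = √2 x + 2 y² > 0`. Where `K < 0`, AM–GM in the form
`2 ρ L ≤ ρ² + L²`, for the linear form `L = y + (√2 - 1) x` that equals `ρ` at `(0,1)` and at
`(α,α)`, trades `ρ` for a polynomial: it suffices that `(x² + y² + L²) K + 2 L c > 0`. This quartic
vanishes to second order at the corner `(α,α)`. Expanded there, its coefficients are bounded using
`√2 ≈ 1.41421` and `γ ≈ 1.5088`, leaving an explicit numerical quartic that is positive on the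
region. On the part of `P₆` away from the corner, the `x`-free part of the quartic is `2 y² q(y)`
for a quadratic `q`, and `γ` is precisely the constant that makes the discriminant of `q` vanish.
-/

open Real

theorem mul_add_pos_of_sq_add_sq_mul_add_pos {ρ L K c : ℝ} (hρ : 0 ≤ ρ) (hL : 0 < L)
    (hc : 0 < c) (h : 0 < (ρ ^ 2 + L ^ 2) * K + 2 * L * c) : 0 < ρ * K + c := by
  rcases le_or_gt 0 K with hK | hK
  · positivity
  · have key : 2 * L * (ρ * K + c) = (ρ ^ 2 + L ^ 2) * K + 2 * L * c + (-K) * (ρ - L) ^ 2 := by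
      ring
    have : 0 < 2 * L * (ρ * K + c) := by
      rw [key]; exact add_pos_of_pos_of_nonneg h (mul_nonneg (by linarith) (sq_nonneg _))
    exact pos_of_mul_pos_right this (by positivity)

theorem image_sub_sq_lt_iff {x y ρ a γ : ℝ} (hρ : 0 < ρ) (hρ2 : ρ ^ 2 = x ^ 2 + y ^ 2) :
    (x / ρ - a) ^ 2 + (a + (1 - 1 / ρ) * y - a) ^ 2 < γ * ((x - a) ^ 2 + (y - a) ^ 2) ↔
      0 < ρ * (γ * ((x - a) ^ 2 + (y - a) ^ 2) - 1 - a ^ 2 - y ^ 2) + 2 * (a * x + y ^ 2) := by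
  have key : γ * ((x - a) ^ 2 + (y - a) ^ 2) - ((x / ρ - a) ^ 2 + (a + (1 - 1 / ρ) * y - a) ^ 2)
      = (ρ * (γ * ((x - a) ^ 2 + (y - a) ^ 2) - 1 - a ^ 2 - y ^ 2) + 2 * (a * x + y ^ 2)) / ρ := by
    field_simp
    linear_combination hρ2
  rw [← sub_pos, key, div_pos_iff_of_pos_right hρ]

theorem one_div_sqrt_two_sq : (1 / √2) ^ 2 = 1 / 2 := by
  rw [div_pow, sq_sqrt zero_le_two, one_pow]

theorem one_div_sqrt_two_bounds : 0.707105 < 1 / √2 ∧ 1 / √2 < 0.70711 := by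
  have h := one_div_sqrt_two_sq
  have hpos : 0 < 1 / √2 := by positivity
  constructor <;> nlinarith

theorem gamma_sq_add_one :
    (5 / 2 - √2 + (1 / 2) * √(29 - 20 * √2)) ^ 2 + 1
      = (5 - 2 * √2) * (5 / 2 - √2 + (1 / 2) * √(29 - 20 * √2)) := by
  have hs : √2 ^ 2 = 2 := sq_sqrt zero_le_two
  have hw : √(29 - 20 * √2) ^ 2 = 29 - 20 * √2 := sq_sqrt (by nlinarith [sqrt_nonneg 2])
  linear_combination hw / 4 - hs

theorem gamma_bounds :
    1.5087 < 5 / 2 - √2 + (1 / 2) * √(29 - 20 * √2) ∧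
      5 / 2 - √2 + (1 / 2) * √(29 - 20 * √2) < 1.5089 := by
  have hs : √2 ^ 2 = 2 := sq_sqrt zero_le_two
  have hs0 := sqrt_nonneg 2
  have hs1 : 1.41421 < √2 := by nlinarith
  have hs2 : √2 < 1.41422 := by nlinarith
  have hw : √(29 - 20 * √2) ^ 2 = 29 - 20 * √2 := sq_sqrt (by nlinarith)
  have hw0 := sqrt_nonneg (29 - 20 * √2)
  constructor <;> nlinarith

def chordPoly (a g x y : ℝ) : ℝ :=
  (x ^ 2 + y ^ 2 + (y + (2 * a - 1) * x) ^ 2)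
      * (g * ((x - a) ^ 2 + (y - a) ^ 2) - 1 - a ^ 2 - y ^ 2)
    + 2 * (y + (2 * a - 1) * x) * (2 * (a * x + y ^ 2))

theorem alpha_mul_gamma_bounds {a g : ℝ} (ha : 0.707105 < a ∧ a < 0.70711)
    (hg : 1.5087 < g ∧ g < 1.5089) : 1.0668 < a * g ∧ a * g < 1.06696 := by
  obtain ⟨ha₁, ha₂⟩ := ha
  obtain ⟨hg₁, hg₂⟩ := hg
  constructor <;> nlinarith

theorem quartic_pos_of_P5 {p v : ℝ} (hp : 0 ≤ p) (hv : 0 < v) (hp1 : p ≤ 0.70711)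
    (hv1 : v ≤ 0.293) :
    0 < 1.845 * p ^ 2 - 0.344 * (p * v) + 1.845 * v ^ 2 - 3.385 * p ^ 3 + 3.49 * (p ^ 2 * v)
      - 1.628 * (p * v ^ 2) + 2.9 * v ^ 3 + 1.766 * p ^ 4 - 1.252 * (p ^ 3 * v)
      + 3.61 * (p ^ 2 * v ^ 2) - 0.423 * (p * v ^ 3) + 1.01 * v ^ 4 := by
  nlinarith [mul_pos hv hv, mul_nonneg hp hp, mul_nonneg hp hv.le, sq_nonneg (p - v),
    mul_nonneg (mul_nonneg (sub_nonneg.2 hp1) hp) hp,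
    mul_nonneg (mul_nonneg (sub_nonneg.2 hp1) hp) hv.le,
    mul_nonneg (mul_nonneg (sub_nonneg.2 hv1) hp) hv.le,
    mul_nonneg (mul_nonneg (sub_nonneg.2 hv1) hv.le) hv.le,
    mul_nonneg (mul_nonneg (mul_nonneg (sub_nonneg.2 hp1) hp) hp) hp,
    mul_nonneg (mul_nonneg (mul_nonneg (sub_nonneg.2 hv1) hp) hp) hp,
    mul_nonneg (sub_nonneg.2 hp1) (sub_nonneg.2 hv1)]

theorem quartic_pos_of_P6 {z d : ℝ} (hz : 0 ≤ z) (hd : 0 < d) (hz1 : z ≤ 0.158)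
    (hdz : d + z ≤ 0.70711) :
    0 < 4.03 * z ^ 2 + 4.03 * (z * d) + 1.845 * d ^ 2 - 11.42 * z ^ 3 - 18.77 * (z ^ 2 * d)
      - 13.65 * (z * d ^ 2) - 3.385 * d ^ 3 + 8.06 * z ^ 4 + 18.46 * (z ^ 3 * d)
      + 17.96 * (z ^ 2 * d ^ 2) + 8.31 * (z * d ^ 3) + 1.766 * d ^ 4 := by
  nlinarith [mul_pos hd hd, mul_nonneg hz hz, mul_nonneg (mul_nonneg hz hz) hz,
    mul_nonneg hz hd.le, mul_pos (mul_pos hd hd) hd, mul_nonneg (mul_nonneg hz hd.le) hd.le,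
    mul_nonneg (mul_nonneg hz hz) hd.le, sq_nonneg (d - 0.5), sq_nonneg (z - 0.1),
    mul_nonneg (mul_nonneg (mul_nonneg hz hd.le) hd.le) hd.le]

theorem cubic_pos_of_P6 {x y : ℝ} (hx : 0 ≤ x) (hxy : x ≤ y) (hy : 0 < y) (hy1 : y ≤ 0.55) :
    0 < 2.835 * y + 1.181 * x - 4.379 * y ^ 2 - 4.268 * (x * y) - 2.501 * x ^ 2 + 0.42 * y ^ 3
      + 3.61 * (x * y ^ 2) + 1.24 * (x ^ 2 * y) + 1.76 * x ^ 3 := by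
  nlinarith [mul_nonneg hx hx, mul_pos hy hy, mul_nonneg hx hy.le,
    mul_nonneg (mul_nonneg (sub_nonneg.2 hy1) hx) hx,
    mul_nonneg (mul_nonneg (sub_nonneg.2 hy1) hx) hy.le,
    mul_nonneg (mul_nonneg (sub_nonneg.2 hy1) hy.le) hy.le,
    mul_nonneg (mul_nonneg (sub_nonneg.2 hxy) hx) hy.le,
    mul_nonneg (mul_nonneg (sub_nonneg.2 hxy) hy.le) hy.le,
    mul_nonneg (sub_nonneg.2 hxy) hy.le, sq_nonneg (x - y),
    mul_nonneg (sub_nonneg.2 hy1) (sub_nonneg.2 hxy)]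

theorem chordPoly_pos_of_P5 {a g x y : ℝ} (ha2 : a ^ 2 = 1 / 2) (ha : 0.707105 < a ∧ a < 0.70711)
    (hg : 1.5087 < g ∧ g < 1.5089) (hx : 0 < x) (hy : a < y) (hr : x ^ 2 + y ^ 2 ≤ 1) :
    0 < chordPoly a g x y := by
  have hag := alpha_mul_gamma_bounds ha hg
  obtain ⟨p, v, rfl, rfl⟩ : ∃ p v, x = a - p ∧ y = a + v := ⟨a - x, y - a, by ring, by ring⟩
  have hp : 0 ≤ p := by nlinarith
  have hv : 0 < v := by linarith
  have hp1 : p ≤ 0.70711 := by linarith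
  have hv1 : v ≤ 0.293 := by nlinarith
  have hE : chordPoly a g (a - p) (a + v) =
      (2 * g + 4 * a - 4) * p ^ 2 - (6 - 8 * a) * (p * v) + (2 * g + 4 * a - 4) * v ^ 2
      - (6 * a * g - 2 * g) * p ^ 3 + (2 * a * g + 2 * g - 8 * a + 4) * (p ^ 2 * v)
      - (6 * a * g - 2 * g + 6 * a - 6) * (p * v ^ 2) + (2 * a * g + 2 * g - 6 * a + 2) * v ^ 3
      + (4 * g - 4 * a * g) * p ^ 4 - (4 * a * g - 2 * g) * (p ^ 3 * v)
      + (6 * g - 4 * a * g + 4 * a - 4) * (p ^ 2 * v ^ 2)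
      - (4 * a * g - 2 * g - 4 * a + 2) * (p * v ^ 3) + (2 * g - 2) * v ^ 4 := by
    unfold chordPoly
    linear_combination (4*g*p^2*v^2 + 4*g*p^4 - 8*a*g*p*v^2 - 8*a*g*p^3 + 4*a^2*g*v^2
      + 4*a^2*g*p^2 - 4*p^2*v^2 + 4*g*v^3 + 4*g*p*v^2 + 4*g*p^2*v + 4*g*p^3 + 8*a*p*v^2
      - 8*a*p^2*v - 4*a^2*v^2 + 16*a^2*p*v - 8*a^2*p^2 - 8*a^3*v + 16*a^3*p - 8*a^4 - 4*v^3
      + 4*p*v^2 + 8*p^2*v + 4*g*v^2 + 4*g*p^2 - 8*a*v^2 + 8*a*p^2 - 8*a^2*v - 8*a^2*p - 4*v^2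
      - 8*p*v - 4*p^2 + 4*a*v - 4*a*p + 4*a^2) * ha2
  rw [hE]
  refine (quartic_pos_of_P5 hp hv hp1 hv1).trans_le ?_
  gcongr ?_ * _ - ?_ * _ + ?_ * _ - ?_ * _ + ?_ * _ - ?_ * _ + ?_ * _ + ?_ * _ - ?_ * _
    + ?_ * _ - ?_ * _ + ?_ * _ <;> linarith

theorem chordPoly_pos_of_P6_of_le {a g x y : ℝ} (ha2 : a ^ 2 = 1 / 2)
    (ha : 0.707105 < a ∧ a < 0.70711) (hg : 1.5087 < g ∧ g < 1.5089)
    (hroot : g ^ 2 + 1 = (5 - 4 * a) * g) (hx : 0 < x) (hxy : x < y) (hy : y ≤ 0.55) :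
    0 < chordPoly a g x y := by
  have hag := alpha_mul_gamma_bounds ha hg
  have hy0 : 0 < y := hx.trans hxy
  set A := (4 * a * g - 2 * g - 2 * a + 3) * y + (4 * g - 4 * a * g + 2 * a - 2) * x
    - (4 * g - 8 * a + 4) * y ^ 2 - (4 * a * g) * (x * y) - (8 * a * g - 4 * g) * x ^ 2
    + (4 * a * g - 2 * g - 4 * a + 2) * y ^ 3 + (6 * g - 4 * a * g + 4 * a - 4) * (x * y ^ 2)
    + (4 * a * g - 2 * g) * (x ^ 2 * y) + (4 * g - 4 * a * g) * x ^ 3 with hA_def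
  set q := (g - 1) * y ^ 2 - (2 * a * g - 2) * y + (g - 3 / 2) with hq_def
  have hE : chordPoly a g x y = x * A + 2 * y ^ 2 * q := by
    rw [hA_def, hq_def]
    unfold chordPoly
    linear_combination (4*g*x^2*y^2 + 4*g*x^4 - 8*a*g*x^2*y - 8*a*g*x^3 + 8*a^2*g*x^2
      - 4*x^2*y^2 - 8*g*x*y^2 + 8*g*x^3 + 8*a*g*x*y - 8*a*g*x^2 - 4*a^2*x^2 + 4*g*y^2
      - 4*g*x*y + 8*g*x^2 - 4*a*x*y + 4*a*x^2 - 2*y^2 + 2*x*y) * ha2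
  have hA : 0 < A := by
    rw [hA_def]
    refine (cubic_pos_of_P6 hx.le hxy.le hy0 hy).trans_le ?_
    gcongr ?_ * _ + ?_ * _ - ?_ * _ - ?_ * _ - ?_ * _ + ?_ * _ + ?_ * _ + ?_ * _ + ?_ * _
      <;> linarith
  -- `hroot` says exactly that `q` has discriminant zero.
  have hq : 0 ≤ q := by
    have hsq : 4 * (g - 1) * q = (2 * (g - 1) * y - (2 * a * g - 2)) ^ 2 := by
      rw [hq_def]
      linear_combination 2 * hroot - 4 * g ^ 2 * ha2
    nlinarith [sq_nonneg (2 * (g - 1) * y - (2 * a * g - 2))]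
  rw [hE]
  exact add_pos_of_pos_of_nonneg (mul_pos hx hA) (by positivity)

theorem chordPoly_pos_of_P6_of_ge {a g x y : ℝ} (ha2 : a ^ 2 = 1 / 2)
    (ha : 0.707105 < a ∧ a < 0.70711) (hg : 1.5087 < g ∧ g < 1.5089)
    (hx : 0 < x) (hxy : x < y) (hy : 0.55 ≤ y) (hya : y ≤ a) :
    0 < chordPoly a g x y := by
  have hag := alpha_mul_gamma_bounds ha hg
  obtain ⟨z, d, rfl, rfl⟩ : ∃ z d, x = a - z - d ∧ y = a - z := ⟨a - y, y - x, by ring, by ring⟩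
  have hz : 0 ≤ z := by linarith
  have hd : 0 < d := by linarith
  have hz1 : z ≤ 0.158 := by linarith
  have hdz : d + z ≤ 0.70711 := by linarith
  have hE : chordPoly a g (a - z - d) (a - z) =
      (4 * g - 2) * z ^ 2 + (4 * g - 2) * (z * d) + (2 * g + 4 * a - 4) * d ^ 2
      - (16 * a * g - 8 * a) * z ^ 3 - (28 * a * g - 4 * g - 10 * a + 2) * (z ^ 2 * d)
      - (20 * a * g - 4 * g - 8 * a + 4) * (z * d ^ 2) - (6 * a * g - 2 * g) * d ^ 3
      + (8 * g - 4) * z ^ 4 + (20 * g - 8 * a * g + 4 * a - 6) * (z ^ 3 * d)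
      + (24 * g - 16 * a * g + 4 * a - 4) * (z ^ 2 * d ^ 2) + (14 * g - 12 * a * g) * (z * d ^ 3)
      + (4 * g - 4 * a * g) * d ^ 4 := by
    unfold chordPoly
    linear_combination (4*g*d^4 + 16*g*z*d^3 + 28*g*z^2*d^2 + 24*g*z^3*d + 8*g*z^4
      - 8*a*g*d^3 - 24*a*g*z*d^2 - 32*a*g*z^2*d - 16*a*g*z^3 + 4*a^2*g*d^2 + 8*a^2*g*z*d
      + 8*a^2*g*z^2 - 4*z^2*d^2 - 8*z^3*d - 4*z^4 + 4*g*d^3 + 8*g*z*d^2 + 8*g*z^2*d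
      + 8*a*z*d^2 + 24*a*z^2*d + 16*a*z^3 - 8*a^2*d^2 - 32*a^2*z*d - 28*a^2*z^2 + 16*a^3*d
      + 24*a^3*z - 8*a^4 - 8*z*d^2 - 12*z^2*d + 4*g*d^2 + 8*g*z*d + 8*g*z^2 + 8*a*d^2
      + 16*a*z*d - 8*a^2*d - 4*d^2 - 4*a*d - 8*a*z + 4*a^2) * ha2
  rw [hE]
  refine (quartic_pos_of_P6 hz hd hz1 hdz).trans_le ?_
  gcongr ?_ * _ + ?_ * _ + ?_ * _ - ?_ * _ - ?_ * _ - ?_ * _ - ?_ * _ + ?_ * _ + ?_ * _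
    + ?_ * _ + ?_ * _ + ?_ * _ <;> linarith

theorem chordPoly_pos {a g x y : ℝ} (ha2 : a ^ 2 = 1 / 2) (ha : 0.707105 < a ∧ a < 0.70711)
    (hg : 1.5087 < g ∧ g < 1.5089) (hroot : g ^ 2 + 1 = (5 - 4 * a) * g)
    (h : (x ^ 2 + y ^ 2 ≤ 1 ∧ 0 < x ∧ a < y) ∨ (0 < x ∧ x < y ∧ y ≤ a)) :
    0 < chordPoly a g x y := by
  rcases h with ⟨hr, hx, hy⟩ | ⟨hx, hxy, hya⟩
  · exact chordPoly_pos_of_P5 ha2 ha hg hx hy hr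
  · rcases le_total y 0.55 with hy | hy
    · exact chordPoly_pos_of_P6_of_le ha2 ha hg hroot hx hxy hy
    · exact chordPoly_pos_of_P6_of_ge ha2 ha hg hx hxy hy hya

/-- If (x,y) ∈ P₅ ∪ P₆, then |T(x,y) − (α,α)|² < γ |(x,y) − (α,α)|²,
where α = 1/√2 and γ = 5/2 − √2 + (1/2)√(29 − 20√2). -/
theorem stmt11 (x y : ℝ)
    (h : (x ^ 2 + y ^ 2 ≤ 1 ∧ 0 < x ∧ 1 / Real.sqrt 2 < y) ∨
         (0 < x ∧ x < y ∧ y ≤ 1 / Real.sqrt 2)) :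
    let α : ℝ := 1 / Real.sqrt 2
    let γ : ℝ := 5/2 - Real.sqrt 2 + (1/2) * Real.sqrt (29 - 20 * Real.sqrt 2)
    let ρ : ℝ := Real.sqrt (x ^ 2 + y ^ 2)
    let x₁ : ℝ := x / ρ
    let y₁ : ℝ := α + (1 - 1 / ρ) * y
    (x₁ - α) ^ 2 + (y₁ - α) ^ 2 < γ * ((x - α) ^ 2 + (y - α) ^ 2) := by
  intro α γ ρ x₁ y₁
  have hα2 : α ^ 2 = 1 / 2 := one_div_sqrt_two_sq
  have hα : 0.707105 < α ∧ α < 0.70711 := one_div_sqrt_two_bounds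
  have hroot : γ ^ 2 + 1 = (5 - 4 * α) * γ := by
    have : 4 * α = 2 * √2 := by
      simp only [α]; field_simp; rw [sq_sqrt zero_le_two]; norm_num
    rw [this]; exact gamma_sq_add_one
  obtain ⟨hx, hy⟩ : 0 < x ∧ 0 < y := by
    rcases h with ⟨-, hx, hy⟩ | ⟨hx, hxy, -⟩
    · exact ⟨hx, by linarith⟩
    · exact ⟨hx, hx.trans hxy⟩
  have hρ : 0 < ρ := sqrt_pos.2 (by positivity)
  have hρ2 : ρ ^ 2 = x ^ 2 + y ^ 2 := sq_sqrt (by positivity)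
  refine (image_sub_sq_lt_iff hρ hρ2).2 (mul_add_pos_of_sq_add_sq_mul_add_pos hρ.le
    (L := y + (2 * α - 1) * x) (by nlinarith) (by positivity) ?_)
  rw [hρ2]
  exact chordPoly_pos hα2 hα gamma_bounds hroot h
end

section
/- The polynomial 64w⁸ − 64√2 w⁷ − 64w⁶ + 80√2 w⁵ + 52w⁴ − 72√2 w³ + 12w² + 16√2 w − 7 has no real root in the half-open interval [0, 1/√2); in fact its only real roots ≥ 0 are w = 1/√2 and w = (√2/4)(√(2√2+1) + √2 − 1). -/
/-!
Substituting `x = √2 w` clears every `√2` and turns the polynomial into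
`(x - 1)⁴ (4x⁴ + 8x³ - 12x - 7)`. For `w ∈ [0, 1/√2)` we get `x ∈ [0, 1)`, where the first factor
is positive and the second is at most `4x + 8x - 12x - 7 = -7`.
-/

open Set

def reducedOctic {R : Type*} [CommRing R] (x : R) : R :=
  4 * x ^ 8 - 8 * x ^ 7 - 8 * x ^ 6 + 20 * x ^ 5 + 13 * x ^ 4 - 36 * x ^ 3 + 6 * x ^ 2 + 16 * x - 7

theorem reducedOctic_eq {R : Type*} [CommRing R] (x : R) :
    reducedOctic x = (x - 1) ^ 4 * (4 * x ^ 4 + 8 * x ^ 3 - 12 * x - 7) := by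
  unfold reducedOctic
  ring

theorem quartic_neg_of_mem_Icc {x : ℝ} (hx : x ∈ Icc 0 1) :
    4 * x ^ 4 + 8 * x ^ 3 - 12 * x - 7 < 0 := by
  have h4 : x ^ 4 ≤ x := pow_le_of_le_one hx.1 hx.2 (by norm_num)
  have h3 : x ^ 3 ≤ x := pow_le_of_le_one hx.1 hx.2 (by norm_num)
  linarith

theorem reducedOctic_neg_of_mem_Ico {x : ℝ} (hx : x ∈ Ico 0 1) : reducedOctic x < 0 := by
  have hx1 : x - 1 ≠ 0 := sub_ne_zero.mpr hx.2.ne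
  rw [reducedOctic_eq]
  exact mul_neg_of_pos_of_neg (by positivity) (quartic_neg_of_mem_Icc (Ico_subset_Icc_self hx))

theorem octic_eq_reducedOctic_of_sq_eq_two {R : Type*} [CommRing R] {s : R} (hs : s ^ 2 = 2) (w : R) :
    64 * w ^ 8 - 64 * s * w ^ 7 - 64 * w ^ 6 + 80 * s * w ^ 5 + 52 * w ^ 4 - 72 * s * w ^ 3
      + 12 * w ^ 2 + 16 * s * w - 7 = reducedOctic (s * w) := by
  have hs4 : s ^ 4 = 4 := by rw [show s ^ 4 = (s ^ 2) ^ 2 by ring, hs]; norm_num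
  unfold reducedOctic
  simp only [mul_pow]
  rw [show s ^ 8 = (s ^ 4) ^ 2 by ring, show s ^ 7 = s ^ 4 * s ^ 2 * s by ring,
    show s ^ 6 = s ^ 4 * s ^ 2 by ring, show s ^ 5 = s ^ 4 * s by ring,
    show s ^ 3 = s ^ 2 * s by ring, hs4, hs]
  ring

/-- The polynomial 64w⁸ − 64√2 w⁷ − 64w⁶ + 80√2 w⁵ + 52w⁴ − 72√2 w³ + 12w²
+ 16√2 w − 7 has no root in [0, 1/√2). -/
theorem stmt13 (w : ℝ) (hw : w ∈ Set.Ico (0:ℝ) (1 / Real.sqrt 2)) :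
    64 * w ^ 8 - 64 * Real.sqrt 2 * w ^ 7 - 64 * w ^ 6 + 80 * Real.sqrt 2 * w ^ 5
      + 52 * w ^ 4 - 72 * Real.sqrt 2 * w ^ 3 + 12 * w ^ 2
      + 16 * Real.sqrt 2 * w - 7 ≠ 0 := by
  have hs : 0 < Real.sqrt 2 := by positivity
  have hx : Real.sqrt 2 * w ∈ Ico 0 1 :=
    ⟨mul_nonneg hs.le hw.1, by rw [← lt_div_iff₀' hs]; exact hw.2⟩
  rw [octic_eq_reducedOctic_of_sq_eq_two (Real.sq_sqrt zero_le_two) w]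
  exact (reducedOctic_neg_of_mem_Ico hx).ne
end

section
/- Let α = 1/√2 and consider the sequence (xₙ,yₙ) generated by xₙ₊₁ = xₙ/ρₙ, yₙ₊₁ = α + (1 − 1/ρₙ)yₙ with ρₙ = √(xₙ²+yₙ²). If x₀ > 0 and yₙ < 0 for all n ≥ 0, then a contradiction follows; hence if (x₀,y₀) satisfies y₀ < 0 < x₀, there exists k ∈ ℕ with y_k ≥ 0 (and then some later iterate has positive second coordinate). -/
/-! While `yₙ < 0`, the term `-yₙ/ρₙ` is positive, so each step raises `y` by at least `α`;
a sequence growing linearly cannot stay negative. -/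

theorem add_le_add_one_sub_one_div_mul (a : ℝ) {y ρ : ℝ} (hy : y ≤ 0) (hρ : 0 ≤ ρ) :
    y + a ≤ a + (1 - 1 / ρ) * y := by
  have : y / ρ ≤ 0 := div_nonpos_of_nonpos_of_nonneg hy hρ
  linarith [show (1 - 1 / ρ) * y = y - y / ρ by ring]

section Archimedean

variable {M : Type*} [AddCommGroup M] [LinearOrder M] [IsOrderedAddMonoid M]

theorem add_nsmul_le_of_add_le_succ {y : ℕ → M} {c : M}
    (h : ∀ n, y n + c ≤ y (n + 1)) (n : ℕ) : y 0 + n • c ≤ y n := by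
  induction n with
  | zero => simp
  | succ n ih =>
    calc y 0 + (n + 1) • c = (y 0 + n • c) + c := by rw [succ_nsmul, add_assoc]
      _ ≤ y n + c := add_le_add_left ih c
      _ ≤ y (n + 1) := h n

theorem exists_nonneg_of_add_le_succ [Archimedean M] {y : ℕ → M} {c : M} (hc : 0 < c)
    (h : ∀ n, y n < 0 → y n + c ≤ y (n + 1)) : ∃ n, 0 ≤ y n := by
  by_contra! hneg
  obtain ⟨n, hn⟩ := exists_lt_nsmul hc (-y 0)
  have hgrowth := add_nsmul_le_of_add_le_succ (fun k => h k (hneg k)) n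
  exact (hneg n).not_ge ((neg_lt_iff_pos_add'.mp hn).trans_le hgrowth).le

end Archimedean

theorem stmt17_general (x y : ℕ → ℝ)
    (hrec : ∀ n, x (n + 1) = x n / Real.sqrt (x n ^ 2 + y n ^ 2) ∧
      y (n + 1) = 1 / Real.sqrt 2 + (1 - 1 / Real.sqrt (x n ^ 2 + y n ^ 2)) * y n) :
    ¬ (∀ n, y n < 0) := by
  have hα : (0 : ℝ) < 1 / Real.sqrt 2 := by positivity
  obtain ⟨n, hn⟩ := exists_nonneg_of_add_le_succ (y := y) hα fun n hn => by
    rw [(hrec n).2]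
    exact add_le_add_one_sub_one_div_mul _ hn.le (Real.sqrt_nonneg _)
  exact fun h => (h n).not_ge hn

/-- For the DR recursion with α = 1/√2, if x₀ > 0 and y₀ ≤ 0, it is impossible
that yₙ < 0 for all n. -/
theorem stmt17 (x y : ℕ → ℝ)
    (hrec : ∀ n, x (n + 1) = x n / Real.sqrt (x n ^ 2 + y n ^ 2) ∧
      y (n + 1) = 1 / Real.sqrt 2 + (1 - 1 / Real.sqrt (x n ^ 2 + y n ^ 2)) * y n)
    (hx0 : 0 < x 0) (hy0 : y 0 ≤ 0) :
    ¬ (∀ n, y n < 0) :=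
  stmt17_general x y hrec
end

section
/- Let α = 1/√2 and consider the Douglas–Rachford recursion xₙ₊₁ = xₙ/ρₙ, yₙ₊₁ = α + (1 − 1/ρₙ)yₙ, ρₙ = √(xₙ²+yₙ²), with x₀ > 0. It is impossible that 0 < xₙ < yₙ for all n ≥ k for some k; i.e., for every m there exists n ≥ m with xₙ ≥ yₙ. -/
/-!
Suppose `0 < xₙ < yₙ` for all large `n`. Then `yₙ` decreases, so it converges; the recursion then
forces `(xₙ, yₙ) → (α, α)`, the fixed point of the map. Near that fixed point the map acts, to
first order, on the gap `dₙ = yₙ - xₙ` and the excess `eₙ = yₙ - α` by `(d, e) ↦ (e, e - d/2)`, a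
rotation by `π/4` composed with a contraction. Hence `d` satisfies, up to `o(d)` errors,
`dₙ₊₂ = dₙ₊₁ - dₙ/2`, whose characteristic roots `(1 ± i)/2` are not real, and no positive
sequence obeys such a recurrence: the ratio `dₙ₊₁/dₙ` would drop by a fixed amount at each step.
-/

open Filter Topology Asymptotics

lemma isLittleO_self_mul_of_tendsto_zero {ι : Type*} {l : Filter ι} {f g : ι → ℝ}
    (hg : Tendsto g l (𝓝 0)) : (fun i => f i * g i) =o[l] f :=
  ((isBigO_refl f l).mul_isLittleO ((isLittleO_one_iff ℝ).2 hg)).congr_right fun _ => mul_one _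

/-- If `A² < 4B`, the ratio `q = dₖ₊₁/dₖ` of a positive solution would satisfy
`qₖ₊₁ ≤ A - B/qₖ ≤ qₖ - (2√B - A)`. -/
lemma not_forall_pos_of_le_linear_rec {A B : ℝ} (hAB : A ^ 2 < 4 * B) {d : ℕ → ℝ}
    (h : ∀ k, d (k + 2) ≤ A * d (k + 1) - B * d k) : ¬ ∀ k, 0 < d k := by
  intro hd
  set q : ℕ → ℝ := fun k => d (k + 1) / d k
  have hq : ∀ k, 0 < q k := fun k => div_pos (hd _) (hd _)
  set s := √B
  have hs : s ^ 2 = B := Real.sq_sqrt (by nlinarith)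
  have hδ : 0 < 2 * s - A := by nlinarith [Real.sqrt_nonneg B]
  have hstep : ∀ k, q (k + 1) ≤ q k - (2 * s - A) := by
    intro k
    have hrec : q (k + 1) + B / q k ≤ A := by
      simp only [q]
      rw [div_div_eq_mul_div, ← add_div, div_le_iff₀ (hd _)]
      linarith [h k]
    have hamgm : 2 * s - q k ≤ B / q k := by
      rw [le_div_iff₀ (hq k)]
      nlinarith [sq_nonneg (q k - s)]
    linarith
  have hdrift : ∀ k : ℕ, q k ≤ q 0 - k * (2 * s - A) := by
    intro k
    induction k with
    | zero => simp
    | succ k ih => push_cast; linarith [hstep k]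
  obtain ⟨k, hk⟩ := exists_nat_gt (q 0 / (2 * s - A))
  rw [div_lt_iff₀ hδ] at hk
  linarith [hdrift k, hq k]

lemma not_forall_pos_of_isLittleO_rotation {d e : ℕ → ℝ}
    (hd : (fun k => d (k + 1) - e k) =o[atTop] d)
    (he : (fun k => e (k + 1) - (e k - d k / 2)) =o[atTop] d) : ¬ ∀ k, 0 < d k := by
  intro hpos
  -- With errors at most `d/20`: `dₖ₊₂ ≤ (1 + 1/20) dₖ₊₁ - (1/2 - 2/20) dₖ`, and `(21/20)² < 4 · 2/5`.
  obtain ⟨N, hN⟩ := eventually_atTop.1 ((hd.def (c := 1 / 20) (by norm_num)).and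
    (he.def (c := 1 / 20) (by norm_num)))
  have hbound : ∀ k ≥ N, |d (k + 1) - e k| ≤ d k / 20 ∧
      |e (k + 1) - (e k - d k / 2)| ≤ d k / 20 := by
    intro k hk
    obtain ⟨h1, h2⟩ := hN k hk
    simp only [Real.norm_eq_abs, abs_of_pos (hpos k)] at h1 h2
    constructor <;> linarith
  refine not_forall_pos_of_le_linear_rec (A := 21 / 20) (B := 2 / 5) (d := fun k => d (N + k))
    (by norm_num) (fun k => ?_) (fun k => hpos _)
  obtain ⟨h1, h2⟩ := hbound (N + k) (Nat.le_add_right N k)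
  obtain ⟨h3, -⟩ := hbound (N + k + 1) (by omega)
  rw [abs_le] at h1 h2 h3
  show d (N + k + 1 + 1) ≤ 21 / 20 * d (N + k + 1) - 2 / 5 * d (N + k)
  linarith [h1.1, h2.2, h3.2]

namespace DouglasRachford

local notation "α" => (1 / Real.sqrt 2 : ℝ)

def IsOrbit (x y : ℕ → ℝ) : Prop :=
  ∀ n, x (n + 1) = x n / Real.sqrt (x n ^ 2 + y n ^ 2) ∧
    y (n + 1) = α + (1 - 1 / Real.sqrt (x n ^ 2 + y n ^ 2)) * y n

lemma alpha_sq : α ^ 2 = 1 / 2 := by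
  rw [div_pow, one_pow, Real.sq_sqrt zero_le_two]

lemma alpha_pos : 0 < α := by positivity

lemma sqrt_sq_add_sq_pos {x : ℝ} (y : ℝ) (hx : 0 < x) : 0 < Real.sqrt (x ^ 2 + y ^ 2) :=
  Real.sqrt_pos.2 (by positivity)

section Step

variable {x y r : ℝ}

lemma step_y_lt (hr : r ^ 2 = x ^ 2 + y ^ 2) (hr0 : 0 < r) (hx : 0 < x) (hxy : x < y) :
    α + (1 - 1 / r) * y < y := by
  have hαr : α * r < y := by
    refine lt_of_pow_lt_pow_left₀ 2 (hx.trans hxy).le ?_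
    rw [mul_pow, alpha_sq, hr]
    nlinarith
  have : α < y / r := by rwa [lt_div_iff₀ hr0]
  linarith [show (1 - 1 / r) * y = y - y / r by ring]

lemma step_x_sq (hr : r ^ 2 = x ^ 2 + y ^ 2) (hr0 : 0 < r) : (x / r) ^ 2 = 1 - (y / r) ^ 2 := by
  field_simp
  linarith

lemma step_gap (hr : r ^ 2 = x ^ 2 + y ^ 2) (hr0 : 0 < r) (hx : 0 < x) (hy : 0 < y) :
    (α + (1 - 1 / r) * y - x / r) - (y - α) =
      (y - x) * ((y - x) / (r * (2 * α * r + x + y))) := by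
  have ha := alpha_sq
  have hden : 0 < 2 * α * r + x + y := by have := alpha_pos; positivity
  generalize α = a at ha hden ⊢
  field_simp
  rw [eq_div_iff (by linarith)]
  -- `(2ar)² - (x + y)² = 2(x² + y²) - (x + y)² = (y - x)²`
  linear_combination (4 * r ^ 2) * ha + 2 * hr

lemma step_excess (hr : r ^ 2 = x ^ 2 + y ^ 2) (hr0 : 0 < r) (hx : 0 < x) (hy : 0 < y) :
    (α + (1 - 1 / r) * y - α) - ((y - α) - (y - x) / 2) =
      (y - x) * ((y - x) / (r * (2 * α * r + x + y)) / 2 + (1 - 1 / r) / 2) := by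
  have := step_gap hr hr0 hx hy
  linear_combination this / 2

end Step

namespace IsOrbit

variable {x y : ℕ → ℝ}

lemma comp_add (h : IsOrbit x y) (m : ℕ) : IsOrbit (fun n => x (m + n)) (fun n => y (m + n)) :=
  fun n => h (m + n)

lemma pos (h : IsOrbit x y) (hx0 : 0 < x 0) : ∀ n, 0 < x n := by
  intro n
  induction n with
  | zero => exact hx0
  | succ n ih =>
    rw [(h n).1]
    exact div_pos ih (sqrt_sq_add_sq_pos _ ih)

lemma tendsto_alpha (h : IsOrbit x y) (hx : ∀ n, 0 < x n) (hxy : ∀ n, x n < y n) :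
    Tendsto x atTop (𝓝 α) ∧ Tendsto y atTop (𝓝 α) := by
  set r : ℕ → ℝ := fun n => Real.sqrt (x n ^ 2 + y n ^ 2)
  have hr0 : ∀ n, 0 < r n := fun n => sqrt_sq_add_sq_pos _ (hx n)
  have hr : ∀ n, r n ^ 2 = x n ^ 2 + y n ^ 2 := fun n => Real.sq_sqrt (by positivity)
  have hy_anti : Antitone y := antitone_nat_of_succ_le fun n =>
    ((h n).2 ▸ step_y_lt (hr n) (hr0 n) (hx n) (hxy n)).le
  obtain ⟨L, hL⟩ : ∃ L, Tendsto y atTop (𝓝 L) :=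
    ⟨_, tendsto_atTop_ciInf hy_anti ⟨0, by rintro _ ⟨n, rfl⟩; exact ((hx n).trans (hxy n)).le⟩⟩
  have hq : Tendsto (fun n => y n / r n) atTop (𝓝 α) := by
    have hlim := (hL.const_add α).sub (hL.comp (tendsto_add_atTop_nat 1))
    rw [add_sub_cancel_right] at hlim
    refine hlim.congr fun n => ?_
    simp only [Function.comp, (h n).2, r]
    ring
  have hx_succ : Tendsto (fun n => x (n + 1)) atTop (𝓝 α) := by
    have hlim := ((hq.pow 2).const_sub 1).sqrt
    rw [alpha_sq, show (1 : ℝ) - 1 / 2 = 1 / 2 by norm_num, ← alpha_sq,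
      Real.sqrt_sq alpha_pos.le] at hlim
    refine hlim.congr fun n => ?_
    rw [← step_x_sq (hr n) (hr0 n), Real.sqrt_sq (div_pos (hx n) (hr0 n)).le, (h n).1]
  have hxlim := (tendsto_add_atTop_iff_nat 1).1 hx_succ
  have hratio : Tendsto (fun n => x n / y n) atTop (𝓝 1) := by
    have hlim := hx_succ.div hq alpha_pos.ne'
    rw [div_self alpha_pos.ne'] at hlim
    refine hlim.congr fun n => ?_
    rw [Pi.div_apply, (h n).1, div_div_div_cancel_right₀ (hr0 n).ne']
  refine ⟨hxlim, ?_⟩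
  have hlim := hxlim.div hratio one_ne_zero
  rw [div_one] at hlim
  refine hlim.congr fun n => ?_
  rw [Pi.div_apply, div_div_cancel₀ (hx n).ne']

lemma not_forall_lt (h : IsOrbit x y) (hx : ∀ n, 0 < x n) : ¬ ∀ n, x n < y n := by
  intro hxy
  obtain ⟨hxlim, hylim⟩ := h.tendsto_alpha hx hxy
  set r : ℕ → ℝ := fun n => Real.sqrt (x n ^ 2 + y n ^ 2)
  have hr0 : ∀ n, 0 < r n := fun n => sqrt_sq_add_sq_pos _ (hx n)
  have hr : ∀ n, r n ^ 2 = x n ^ 2 + y n ^ 2 := fun n => Real.sq_sqrt (by positivity)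
  have hy : ∀ n, 0 < y n := fun n => (hx n).trans (hxy n)
  have hrlim : Tendsto r atTop (𝓝 1) := by
    have hlim := ((hxlim.pow 2).add (hylim.pow 2)).sqrt
    rwa [alpha_sq, add_halves, Real.sqrt_one] at hlim
  set g : ℕ → ℝ := fun n => (y n - x n) / (r n * (2 * α * r n + x n + y n))
  have hg : Tendsto g atTop (𝓝 0) := by
    have hlim := (hylim.sub hxlim).div
      (hrlim.mul (((hrlim.const_mul (2 * α)).add hxlim).add hylim)) (by positivity)
    rwa [sub_self, zero_div] at hlim
  have hg' : Tendsto (fun n => g n / 2 + (1 - 1 / r n) / 2) atTop (𝓝 0) := by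
    have hlim := (hg.div_const 2).add
      ((((tendsto_const_nhds (x := (1 : ℝ))).div hrlim one_ne_zero).const_sub 1).div_const 2)
    rwa [zero_div, div_one, sub_self, zero_div, add_zero] at hlim
  refine not_forall_pos_of_isLittleO_rotation (d := fun n => y n - x n) (e := fun n => y n - α)
    ((isLittleO_self_mul_of_tendsto_zero hg).congr_left fun n => ?_)
    ((isLittleO_self_mul_of_tendsto_zero hg').congr_left fun n => ?_) fun n => sub_pos.2 (hxy n)
  · rw [(h n).1, (h n).2, step_gap (hr n) (hr0 n) (hx n) (hy n)]
  · rw [(h n).2, step_excess (hr n) (hr0 n) (hx n) (hy n)]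

end IsOrbit

end DouglasRachford

/-- For the DR recursion with α = 1/√2 and x₀ > 0, the iterates cannot stay
strictly above the diagonal forever: for every m there is n ≥ m with xₙ ≥ yₙ. -/
theorem stmt18 (x y : ℕ → ℝ)
    (hrec : ∀ n, x (n + 1) = x n / Real.sqrt (x n ^ 2 + y n ^ 2) ∧
      y (n + 1) = 1 / Real.sqrt 2 + (1 - 1 / Real.sqrt (x n ^ 2 + y n ^ 2)) * y n)
    (hx0 : 0 < x 0) :
    ∀ m : ℕ, ∃ n ≥ m, x n ≥ y n := by
  have horbit : DouglasRachford.IsOrbit x y := hrec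
  intro m
  by_contra! hlt
  exact (horbit.comp_add m).not_forall_lt (fun n => horbit.pos hx0 (m + n))
    fun n => hlt (m + n) (Nat.le_add_right m n)
end

section
/- Let α = 1/√2 and consider the Douglas–Rachford recursion xₙ₊₁ = xₙ/ρₙ, yₙ₊₁ = α + (1 − 1/ρₙ)yₙ, ρₙ = √(xₙ²+yₙ²). If (x₀,y₀) ∈ [ε, 1] × [0, 1] with ε = (1 − 2^{−1/3})^{3/2}, then the sequence (xₙ,yₙ) converges to (1/√2, 1/√2). -/
/-!
Write `T` for the Douglas–Rachford step and `V (x, y) = ((x - α)² + (y - α)²) / x`. Wherever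
`0.0932 ≤ x ≤ 1` and `0 ≤ y ≤ 1`, one step shrinks `V` by the factor `999 / 1000`. The square
`[ε, 1] × [0, 1]` is not invariant under `T`, but its union with the strip
`[0.0932, ε] × [α, 0.716]` is: iterates leave the square only into the strip, and from the
strip they return to the square in one step. The value of `ε` is exactly what keeps the next
`y` nonnegative on the square. As `0 < x ≤ 1` there, the squared distance to `(α, α)` is at
most `V`, so the iterates converge geometrically.
-/

open Set Filter Topology

theorem mem_and_le_geometric_of_mapsTo {α : Type*} {f : α → α} {s : Set α} {V : α → ℝ} {c : ℝ}
    (hc : 0 ≤ c) (hf : MapsTo f s s) (hV : ∀ p ∈ s, V (f p) ≤ c * V p)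
    {p : ℕ → α} (hp : ∀ n, p (n + 1) = f (p n)) (h0 : p 0 ∈ s) (n : ℕ) :
    p n ∈ s ∧ V (p n) ≤ c ^ n * V (p 0) := by
  induction n with
  | zero => simpa using h0
  | succ n ih =>
    rw [hp, pow_succ', mul_assoc]
    exact ⟨hf ih.1, (hV _ ih.1).trans (mul_le_mul_of_nonneg_left ih.2 hc)⟩

theorem tendsto_of_dist_sq_le_geometric {X : Type*} [PseudoMetricSpace X] {p : ℕ → X} {q : X}
    {C c : ℝ} (hc0 : 0 ≤ c) (hc1 : c < 1) (h : ∀ n, dist (p n) q ^ 2 ≤ c ^ n * C) :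
    Tendsto p atTop (𝓝 q) := by
  have hgeo : Tendsto (fun n => √(c ^ n * C)) atTop (𝓝 0) := by
    simpa using ((tendsto_pow_atTop_nhds_zero_of_lt_one hc0 hc1).mul_const C).sqrt
  refine tendsto_iff_dist_tendsto_zero.2 (squeeze_zero (fun _ => dist_nonneg) (fun n => ?_) hgeo)
  exact Real.le_sqrt_of_sq_le (h n)

theorem mem_Icc_of_sq_eq_half {a : ℝ} (ha : a ^ 2 = 1 / 2) (ha0 : 0 < a) :
    a ∈ Icc 0.7071 0.70711 :=
  ⟨by nlinarith, by nlinarith⟩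

theorem two_rpow_neg_third_pow_three : ((2 : ℝ) ^ (-(1 : ℝ) / 3)) ^ 3 = 1 / 2 := by
  rw [← Real.rpow_natCast, ← Real.rpow_mul zero_le_two]
  norm_num

theorem two_rpow_neg_third_mem : (2 : ℝ) ^ (-(1 : ℝ) / 3) ∈ Icc 0.7937 0.79371 := by
  have h3 := two_rpow_neg_third_pow_three
  have h0 : 0 < (2 : ℝ) ^ (-(1 : ℝ) / 3) := by positivity
  constructor <;> nlinarith [sq_nonneg ((2 : ℝ) ^ (-(1 : ℝ) / 3) - 0.7937)]

-- Equality holds at `r = 1 - b`, so `(1 - b) ^ 3` is the largest constant that works.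
theorem sq_sub_mul_one_sub_sq_le {b r : ℝ} (hb3 : b ^ 3 = 1 / 2) (hb : b ∈ Icc 0.79 0.794)
    (hr : r ∈ Icc 0 1) : (r ^ 2 - (1 - b) ^ 3) * (1 - r) ^ 2 ≤ r ^ 2 / 2 := by
  obtain ⟨h0, h1⟩ := hr
  nlinarith [sq_nonneg (r - (1 - b)), mul_nonneg h0 (sub_nonneg.2 h1), sq_nonneg (r * (1 - r)),
    mul_nonneg (mul_nonneg h0 h0) (sub_nonneg.2 h1), sq_nonneg ((r - (1 - b)) * (1 - r)),
    sq_nonneg (r + b - 1), mul_nonneg (sq_nonneg (r + b - 1)) h0,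
    mul_nonneg (sq_nonneg (r + b - 1)) (sub_nonneg.2 h1), hb.1, hb.2]

noncomputable def drEps : ℝ := ((1 : ℝ) - 2 ^ (-(1 : ℝ) / 3)) ^ ((3 : ℝ) / 2)

theorem drEps_pos : 0 < drEps :=
  Real.rpow_pos_of_pos (by linarith [two_rpow_neg_third_mem.2]) _

theorem drEps_sq : drEps ^ 2 = (1 - (2 : ℝ) ^ (-(1 : ℝ) / 3)) ^ 3 := by
  rw [drEps, ← Real.rpow_natCast, ← Real.rpow_mul (by linarith [two_rpow_neg_third_mem.2]),
    ← Real.rpow_natCast]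
  norm_num

theorem drEps_sq_mem : drEps ^ 2 ∈ Icc 0.00877 0.00879 := by
  obtain ⟨hl, hu⟩ := two_rpow_neg_third_mem
  rw [drEps_sq]
  constructor
  · nlinarith [pow_le_pow_left₀ (by norm_num)
      (by linarith : (0.20629 : ℝ) ≤ 1 - 2 ^ (-(1 : ℝ) / 3)) 3]
  · nlinarith [pow_le_pow_left₀ (by linarith)
      (by linarith : 1 - 2 ^ (-(1 : ℝ) / 3) ≤ (0.2063 : ℝ)) 3]

theorem drEps_mem : drEps ∈ Icc 0.0932 1 := by
  obtain ⟨hl, hu⟩ := drEps_sq_mem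
  exact ⟨le_of_sq_le_sq (by linarith) drEps_pos.le, le_of_sq_le_sq (by linarith) zero_le_one⟩

theorem sq_sub_drEps_sq_mul_le {r : ℝ} (hr : r ∈ Icc 0 1) :
    (r ^ 2 - drEps ^ 2) * (1 - r) ^ 2 ≤ r ^ 2 / 2 := by
  obtain ⟨hl, hu⟩ := two_rpow_neg_third_mem
  rw [drEps_sq]
  exact sq_sub_mul_one_sub_sq_le two_rpow_neg_third_pow_three ⟨by linarith, by linarith⟩ hr

noncomputable def drStep (a : ℝ) (p : ℝ × ℝ) : ℝ × ℝ :=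
  (p.1 / √(p.1 ^ 2 + p.2 ^ 2), a + (1 - 1 / √(p.1 ^ 2 + p.2 ^ 2)) * p.2)

noncomputable def drLyapunov (a : ℝ) (p : ℝ × ℝ) : ℝ :=
  ((p.1 - a) ^ 2 + (p.2 - a) ^ 2) / p.1

def drRegion (a ε : ℝ) : Set (ℝ × ℝ) :=
  Icc ε 1 ×ˢ Icc 0 1 ∪ Icc 0.0932 ε ×ˢ Icc a 0.716

theorem dist_sq_le_drLyapunov {a : ℝ} {p : ℝ × ℝ} (hx : p.1 ∈ Ioc 0 1) :
    dist p (a, a) ^ 2 ≤ drLyapunov a p := by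
  have hmax : dist p (a, a) ^ 2 ≤ (p.1 - a) ^ 2 + (p.2 - a) ^ 2 := by
    rw [Prod.dist_eq, Real.dist_eq, Real.dist_eq]
    rcases max_cases |p.1 - a| |p.2 - a| with ⟨h, -⟩ | ⟨h, -⟩ <;>
      rw [h, sq_abs] <;> nlinarith [sq_nonneg (p.1 - a), sq_nonneg (p.2 - a)]
  exact hmax.trans (le_div_self (by positivity) hx.1 hx.2)

theorem drRegion_subset {a ε : ℝ} (ha : a ∈ Icc 0 1) (hε : ε ∈ Icc 0.0932 1) :
    drRegion a ε ⊆ Icc 0.0932 1 ×ˢ Icc 0 1 := by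
  rintro p (⟨⟨hx1, hx2⟩, hy⟩ | ⟨⟨hx1, hx2⟩, hy1, hy2⟩)
  · exact ⟨⟨hε.1.trans hx1, hx2⟩, hy⟩
  · exact ⟨⟨hx1, hx2.trans hε.2⟩, ha.1.trans hy1, hy2.trans (by norm_num)⟩

section Step

variable {a ε x y r x' y' : ℝ}

theorem mem_drRegion_of_le_one (ha : a ^ 2 = 1 / 2) (ha0 : 0 < a) (hε0 : 0 ≤ ε)
    (hε : ∀ r ∈ Icc (0 : ℝ) 1, (r ^ 2 - ε ^ 2) * (1 - r) ^ 2 ≤ r ^ 2 / 2)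
    (hx : x ∈ Icc ε 1) (hy : y ∈ Icc 0 1) (hr2 : r ^ 2 = x ^ 2 + y ^ 2) (hr0 : 0 < r)
    (hr1 : r ≤ 1) (hx' : x' * r = x) (hy' : y' * r = a * r + (r - 1) * y) :
    (x', y') ∈ drRegion a ε := by
  obtain ⟨hx1, hx2⟩ := hx
  obtain ⟨hy1, hy2⟩ := hy
  obtain ⟨haL, haU⟩ := mem_Icc_of_sq_eq_half ha ha0
  have hxr : x ≤ r := by nlinarith
  have hy_sq : y ^ 2 ≤ r ^ 2 - ε ^ 2 := by nlinarith
  -- `0 ≤ y'` is `(1 - r) y ≤ a r`; this is where the value of `ε` enters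
  have hyr : (1 - r) * y ≤ a * r := by
    refine le_of_sq_le_sq ?_ (by positivity)
    have := hε r ⟨hr0.le, hr1⟩
    rw [mul_pow, mul_pow, ha]
    nlinarith [mul_le_mul_of_nonneg_right hy_sq (sq_nonneg (1 - r))]
  refine Or.inl ⟨⟨?_, ?_⟩, ?_, ?_⟩ <;> nlinarith

theorem mem_drRegion_of_one_lt (ha : a ^ 2 = 1 / 2) (ha0 : 0 < a) (hε0 : 0 ≤ ε)
    (hε : ε ^ 2 ∈ Icc 0.00877 0.00879)
    (hx : x ∈ Icc ε 1) (hy : y ∈ Icc 0 1) (hr2 : r ^ 2 = x ^ 2 + y ^ 2)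
    (hr1 : 1 < r) (hx' : x' * r = x) (hy' : y' * r = a * r + (r - 1) * y) :
    (x', y') ∈ drRegion a ε := by
  obtain ⟨hx1, hx2⟩ := hx
  obtain ⟨hy1, hy2⟩ := hy
  obtain ⟨haL, haU⟩ := mem_Icc_of_sq_eq_half ha ha0
  have hx'0 : 0 ≤ x' := by nlinarith
  have hy'a : a ≤ y' := by nlinarith
  have har : a * r ≤ 1 := le_of_sq_le_sq (by rw [mul_pow, ha]; nlinarith) zero_le_one
  have hy'1 : y' ≤ 1 := by nlinarith
  rcases le_or_gt ε x' with hεx' | hx'ε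
  · exact Or.inl ⟨⟨hεx', by nlinarith⟩, by linarith, hy'1⟩
  -- `x' = x / r` with `ε ≤ x` and `r ^ 2 ≤ x ^ 2 + 1`
  have hx'l : 0.0932 ≤ x' := by
    refine le_of_sq_le_sq ?_ hx'0
    have : x ^ 2 ≤ x' ^ 2 * (x ^ 2 + 1) := by
      nlinarith [mul_nonneg (sq_nonneg x') (by nlinarith : (0 : ℝ) ≤ 1 - y ^ 2)]
    nlinarith [hε.1]
  -- `x < ε r` forces `r` to be close to `1`
  have hru : r ≤ 1.00443 := by
    have hxε : x < ε * r := by nlinarith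
    have : x ^ 2 ≤ 0.00887 := by
      nlinarith only [mul_self_lt_mul_self (by linarith) hxε, hr2, hε.2,
        mul_nonneg (sq_nonneg ε) (by nlinarith : (0 : ℝ) ≤ 1 - y ^ 2),
        mul_le_mul_of_nonneg_left hε.2 (sq_nonneg x)]
    exact le_of_sq_le_sq (by nlinarith) (by norm_num)
  have hy'u : y' ≤ 0.716 := by
    nlinarith [mul_nonneg (by linarith : (0 : ℝ) ≤ r - 1) (sub_nonneg.2 hy2)]
  exact Or.inr ⟨⟨hx'l, hx'ε.le⟩, hy'a, hy'u⟩

theorem mem_drRegion_of_mem_strip (ha : a ^ 2 = 1 / 2) (ha0 : 0 < a) (hε : ε ^ 2 ≤ 0.00879)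
    (hx : x ∈ Icc 0.0932 ε) (hy : y ∈ Icc a 0.716) (hr2 : r ^ 2 = x ^ 2 + y ^ 2)
    (hr0 : 0 < r) (hx' : x' * r = x) (hy' : y' * r = a * r + (r - 1) * y) :
    (x', y') ∈ drRegion a ε := by
  obtain ⟨hx1, hx2⟩ := hx
  obtain ⟨hy1, hy2⟩ := hy
  obtain ⟨haL, haU⟩ := mem_Icc_of_sq_eq_half ha ha0
  have hrl : 0.7132 ≤ r := le_of_sq_le_sq (by nlinarith) hr0.le
  have hru : r ≤ 0.7222 := le_of_sq_le_sq (by nlinarith) (by norm_num)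
  have hεu : ε ≤ 0.0938 := le_of_sq_le_sq (by nlinarith) (by norm_num)
  refine Or.inl ⟨⟨?_, ?_⟩, ?_, ?_⟩ <;>
    nlinarith [mul_nonneg (sub_nonneg.2 hru) (by nlinarith : (0 : ℝ) ≤ x'),
      mul_nonneg (by linarith : (0 : ℝ) ≤ 1 - r) (by linarith : (0 : ℝ) ≤ 0.716 - y),
      mul_nonneg (by linarith : (0 : ℝ) ≤ a - 0.7071) hr0.le]

end Step

theorem mapsTo_drStep_drRegion {a ε : ℝ} (ha : a ^ 2 = 1 / 2) (ha0 : 0 < a) (hε0 : 0 < ε)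
    (hε : ε ^ 2 ∈ Icc 0.00877 0.00879)
    (hε_key : ∀ r ∈ Icc (0 : ℝ) 1, (r ^ 2 - ε ^ 2) * (1 - r) ^ 2 ≤ r ^ 2 / 2) :
    MapsTo (drStep a) (drRegion a ε) (drRegion a ε) := by
  rintro ⟨x, y⟩ hp
  have hx0 : 0 < x := by rcases hp with ⟨⟨hx, -⟩, -⟩ | ⟨⟨hx, -⟩, -⟩ <;> linarith
  set r := √(x ^ 2 + y ^ 2) with hr
  have hr2 : r ^ 2 = x ^ 2 + y ^ 2 := Real.sq_sqrt (by positivity)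
  have hr0 : 0 < r := Real.sqrt_pos.2 (by positivity)
  have hx' : x / r * r = x := div_mul_cancel₀ x hr0.ne'
  have hy' : (a + (1 - 1 / r) * y) * r = a * r + (r - 1) * y := by field_simp
  simp only [drStep, ← hr]
  rcases hp with ⟨hx, hy⟩ | ⟨hx, hy⟩
  · rcases le_or_gt r 1 with hr1 | hr1
    · exact mem_drRegion_of_le_one ha ha0 hε0.le hε_key hx hy hr2 hr0 hr1 hx' hy'
    · exact mem_drRegion_of_one_lt ha ha0 hε0.le hε hx hy hr2 hr1 hx' hy'
  · exact mem_drRegion_of_mem_strip ha ha0 hε.2 hx hy hr2 hr0 hx' hy'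

section Contraction

variable {a x y r : ℝ}

theorem sub_sq_add_sub_sq_le (ha : a ^ 2 = 1 / 2) (ha0 : 0 < a) (hx : x ∈ Icc 0.0932 1)
    (hy : y ∈ Icc 0 1) (hr2 : r ^ 2 = x ^ 2 + y ^ 2) (hr0 : 0 ≤ r) :
    (x - a) ^ 2 + (y - a) ^ 2 ≤ 22 * ((2 - r) * y - a) ^ 2 + 41 * (r - 1) ^ 2 := by
  obtain ⟨hx1, hx2⟩ := hx
  obtain ⟨hy1, hy2⟩ := hy
  obtain ⟨haL, haU⟩ := mem_Icc_of_sq_eq_half ha ha0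
  have hr : r ≤ 1.415 := le_of_sq_le_sq (by nlinarith) (by norm_num)
  have hya : (y - a) ^ 2 ≤ 2 * ((2 - r) * y - a) ^ 2 + 2 * (r - 1) ^ 2 := by
    nlinarith [sq_nonneg ((2 - r) * y - a - (r - 1) * y),
      mul_nonneg (sq_nonneg (r - 1)) (by nlinarith : (0 : ℝ) ≤ 1 - y ^ 2)]
  -- `(x - a) (x + a) = (r ^ 2 - 1) - (y - a) (y + a)` and `x + a ≥ 0.8`
  have hxa : (x - a) ^ 2 ≤ 19 * (r - 1) ^ 2 + 10 * (y - a) ^ 2 := by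
    have h1 : 0.64 * (x - a) ^ 2 ≤ ((x - a) * (x + a)) ^ 2 := by
      nlinarith [mul_nonneg (sq_nonneg (x - a)) (by linarith : (0 : ℝ) ≤ x + a)]
    have h2 : (r ^ 2 - 1) ^ 2 ≤ 5.84 * (r - 1) ^ 2 := by
      have : (r + 1) ^ 2 ≤ 5.84 := by
        nlinarith only [mul_nonneg (by linarith : (0 : ℝ) ≤ 1.415 - r)
          (by linarith : 0 ≤ r + 3.415)]
      nlinarith only [mul_le_mul_of_nonneg_left this (sq_nonneg (r - 1))]
    have h3 : ((y - a) * (y + a)) ^ 2 ≤ 2.92 * (y - a) ^ 2 := by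
      have : (y + a) ^ 2 ≤ 2.92 := by
        nlinarith only [mul_le_mul hy2 haU ha0.le zero_le_one, haU, hy2, hy1, ha0]
      nlinarith only [mul_le_mul_of_nonneg_left this (sq_nonneg (y - a))]
    have hid : (x - a) * (x + a) = (r ^ 2 - 1) - (y - a) * (y + a) := by
      linear_combination -hr2 - 2 * ha
    rw [hid] at h1
    nlinarith only [h1, h2, h3, sq_nonneg (r ^ 2 - 1 + (y - a) * (y + a))]
  linarith

theorem drStep_lyapunov_numerator_le (ha : a ^ 2 = 1 / 2) (ha0 : 0 < a) (hx : x ∈ Icc 0.0932 1)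
    (hy : y ∈ Icc 0 1) (hr2 : r ^ 2 = x ^ 2 + y ^ 2) (hr0 : 0 ≤ r) :
    r * (3 / 2 + y ^ 2) - 2 * (a * x + y ^ 2) ≤ 999 / 1000 * ((x - a) ^ 2 + (y - a) ^ 2) := by
  have hr : r ≤ 1.415 := le_of_sq_le_sq (by nlinarith [hx.2, hy.2, hx.1, hy.1]) (by norm_num)
  have hD := sub_sq_add_sub_sq_le ha ha0 hx hy hr2 hr0
  set d := (x - a) ^ 2 + (y - a) ^ 2
  have hid : (2 - r) * (d - (r * (3 / 2 + y ^ 2) - 2 * (a * x + y ^ 2))) =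
      ((2 - r) * y - a) ^ 2 + (r - 1) ^ 2 * (3 / 2 - r) := by
    simp only [d]; linear_combination (r - 2) * hr2 + (3 - 2 * r) * ha
  have key : (2 - r) * (d / 1000) ≤
      (2 - r) * (d - (r * (3 / 2 + y ^ 2) - 2 * (a * x + y ^ 2))) := by
    rw [hid]
    nlinarith [mul_nonneg hr0 (by positivity : 0 ≤ d),
      mul_nonneg (sq_nonneg (r - 1)) (by linarith : (0 : ℝ) ≤ 1.415 - r)]
  linarith [le_of_mul_le_mul_left key (by linarith : (0 : ℝ) < 2 - r)]

end Contraction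

theorem drLyapunov_drStep_eq {a x y : ℝ} (ha : a ^ 2 = 1 / 2) (hx : 0 < x) :
    drLyapunov a (drStep a (x, y)) =
      (√(x ^ 2 + y ^ 2) * (3 / 2 + y ^ 2) - 2 * (a * x + y ^ 2)) / x := by
  have hr2 : √(x ^ 2 + y ^ 2) ^ 2 = x ^ 2 + y ^ 2 := Real.sq_sqrt (by positivity)
  have hr0 : 0 < √(x ^ 2 + y ^ 2) := Real.sqrt_pos.2 (by positivity)
  simp only [drLyapunov, drStep]
  field_simp
  linear_combination (-2) * hr2 + 2 * √(x ^ 2 + y ^ 2) ^ 2 * ha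

theorem drLyapunov_drStep_le {a : ℝ} (ha : a ^ 2 = 1 / 2) (ha0 : 0 < a) {p : ℝ × ℝ}
    (hp : p ∈ Icc 0.0932 1 ×ˢ Icc 0 1) :
    drLyapunov a (drStep a p) ≤ 999 / 1000 * drLyapunov a p := by
  obtain ⟨x, y⟩ := p
  obtain ⟨hx, hy⟩ := hp
  have hx0 : 0 < x := by linarith [hx.1]
  rw [drLyapunov_drStep_eq ha hx0, drLyapunov, mul_div_assoc']
  refine div_le_div_of_nonneg_right ?_ hx0.le
  exact drStep_lyapunov_numerator_le ha ha0 hx hy (Real.sq_sqrt (by positivity))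
    (Real.sqrt_nonneg _)

/-- Main theorem: for the DR recursion with α = 1/√2, if
(x₀,y₀) ∈ [ε,1] × [0,1] with ε = (1 − 2^{−1/3})^{3/2}, then (xₙ,yₙ) → (α,α). -/
theorem stmt19 (x y : ℕ → ℝ)
    (hrec : ∀ n, x (n + 1) = x n / Real.sqrt (x n ^ 2 + y n ^ 2) ∧
      y (n + 1) = 1 / Real.sqrt 2 + (1 - 1 / Real.sqrt (x n ^ 2 + y n ^ 2)) * y n)
    (hx0 : x 0 ∈ Set.Icc (((1:ℝ) - 2 ^ (-(1:ℝ)/3)) ^ ((3:ℝ)/2)) 1)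
    (hy0 : y 0 ∈ Set.Icc (0:ℝ) 1) :
    Filter.Tendsto (fun n => (x n, y n)) Filter.atTop
      (nhds (1 / Real.sqrt 2, 1 / Real.sqrt 2)) := by
  set a := 1 / √2
  have ha : a ^ 2 = 1 / 2 := by rw [div_pow, one_pow, Real.sq_sqrt zero_le_two]
  have ha0 : 0 < a := by positivity
  have hregion : drRegion a drEps ⊆ Icc 0.0932 1 ×ˢ Icc 0 1 :=
    drRegion_subset ⟨ha0.le, (mem_Icc_of_sq_eq_half ha ha0).2.trans (by norm_num)⟩ drEps_mem
  have hdecay := mem_and_le_geometric_of_mapsTo (p := fun n => (x n, y n)) (c := 999 / 1000)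
    (by norm_num) (mapsTo_drStep_drRegion ha ha0 drEps_pos drEps_sq_mem
      fun r hr => sq_sub_drEps_sq_mul_le hr)
    (fun p hp => drLyapunov_drStep_le ha ha0 (hregion hp))
    (fun n => Prod.ext (hrec n).1 (hrec n).2) (Or.inl ⟨hx0, hy0⟩)
  refine tendsto_of_dist_sq_le_geometric (c := 999 / 1000) (C := drLyapunov a (x 0, y 0))
    (by norm_num) (by norm_num) fun n => ?_
  obtain ⟨hmem, hle⟩ := hdecay n
  obtain ⟨⟨hxl, hxu⟩, -⟩ := hregion hmem
  exact (dist_sq_le_drLyapunov ⟨by linarith, hxu⟩).trans hle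
end
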